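/- arXiv:1405.0680 — 2 statements merged into one kernel-verified Lean document; each statement's English description precedes it below -/
import Mathlib

section
/- Let Σ, Σ̂ ∈ ℝ^{p×p} be symmetric matrices with eigenvalues λ₁ ≥ … ≥ λ_p and λ̂₁ ≥ … ≥ λ̂_p respectively, fix 1 ≤ r ≤ s ≤ p with d := s − r + 1, and assume δ := min(λ_{r−1} − λ_r, λ_s − λ_{s+1}) > 0 (with λ₀ := ∞, λ_{p+1} := −∞). Let V = (v_r, …, v_s) ∈ ℝ^{p×d} and V̂ = (v̂_r, …, v̂_s) ∈ ℝ^{p×d} have orthonormal columns satisfying Σv_j = λ_j v_j and Σ̂v̂_j = λ̂_j v̂_j for j = r, …, s. Then ‖sin Θ(V̂, V)‖_F ≤ 2 d^{1/2} ‖Σ̂ − Σ‖_op / δ. -/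
open Matrix

noncomputable def frobNorm {m n : Type*} [Fintype m] [Fintype n] (A : Matrix m n ℝ) : ℝ :=
  Real.sqrt (∑ i, ∑ j, (A i j) ^ 2)

noncomputable def opNorm {p q : ℕ} (A : Matrix (Fin p) (Fin q) ℝ) : ℝ :=
  ‖LinearMap.toContinuousLinearMap (Matrix.toEuclideanLin A)‖

/-!
Write `c = Qᵀ v̂_j` for the coordinates of a column of `V̂` in an eigenbasis `Q` of `Σ`
(eigenvalues `μᵢ`). Since `Σ̂ v̂_j = λ̂_j v̂_j`, the vector `(Σ̂ - Σ) v̂_j` has coordinates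
`(λ̂_j - μᵢ) cᵢ`, so `∑ᵢ (μᵢ - λ̂_j)² cᵢ² ≤ ‖Σ̂ - Σ‖²`, and the mass of `c` on the eigen-directions
outside the block `r, …, s` is at most `‖Σ̂ - Σ‖² / g²` when `g` separates `λ̂_j` from the
eigenvalues of `Σ` outside the block. The columns of `V` are an orthonormal basis of the block
eigenspace (a dimension count), so `d - ‖V̂ᵀV‖_F²` is exactly the total off-block mass.
Weyl's inequality `|λ̂_k - λ_k| ≤ ‖Σ̂ - Σ‖` gives `g ≥ δ - ‖Σ̂ - Σ‖ ≥ δ / 2` when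
`‖Σ̂ - Σ‖ < δ / 2`; otherwise the claimed bound exceeds `√d` and there is nothing to prove.
-/

lemma norm_toLp_sq {n : Type*} [Fintype n] (v : n → ℝ) : ‖WithLp.toLp 2 v‖ ^ 2 = v ⬝ᵥ v := by
  rw [← real_inner_self_eq_norm_sq, EuclideanSpace.inner_toLp_toLp, star_trivial]

lemma norm_toLp_mulVec_le {p q : ℕ} (A : Matrix (Fin p) (Fin q) ℝ) (v : Fin q → ℝ) :
    ‖WithLp.toLp 2 (A *ᵥ v)‖ ≤ opNorm A * ‖WithLp.toLp 2 v‖ :=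
  (LinearMap.toContinuousLinearMap (toEuclideanLin A)).le_opNorm (WithLp.toLp 2 v)

lemma mulVec_dotProduct_self_le_opNorm_sq_mul {p q : ℕ} (A : Matrix (Fin p) (Fin q) ℝ)
    (v : Fin q → ℝ) :
    A *ᵥ v ⬝ᵥ A *ᵥ v ≤ opNorm A ^ 2 * (v ⬝ᵥ v) := by
  rw [← norm_toLp_sq, ← norm_toLp_sq, ← mul_pow]
  exact pow_le_pow_left₀ (norm_nonneg _) (norm_toLp_mulVec_le A v) 2

lemma dotProduct_mulVec_le_opNorm_mul {p : ℕ} (E : Matrix (Fin p) (Fin p) ℝ) (x : Fin p → ℝ) :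
    x ⬝ᵥ E *ᵥ x ≤ opNorm E * (x ⬝ᵥ x) := by
  calc x ⬝ᵥ E *ᵥ x = inner ℝ (WithLp.toLp 2 x) (WithLp.toLp 2 (E *ᵥ x)) := by
        rw [EuclideanSpace.inner_toLp_toLp, star_trivial, dotProduct_comm]
    _ ≤ ‖WithLp.toLp 2 x‖ * ‖WithLp.toLp 2 (E *ᵥ x)‖ := real_inner_le_norm _ _
    _ ≤ ‖WithLp.toLp 2 x‖ * (opNorm E * ‖WithLp.toLp 2 x‖) := by
        gcongr; exact norm_toLp_mulVec_le E x
    _ = opNorm E * (x ⬝ᵥ x) := by rw [← norm_toLp_sq]; ring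

lemma opNorm_sub_comm {p : ℕ} (A B : Matrix (Fin p) (Fin p) ℝ) :
    opNorm (A - B) = opNorm (B - A) := by
  rw [opNorm, opNorm, ← neg_sub, map_neg, map_neg, norm_neg]

lemma transpose_mulVec_dotProduct_transpose_mulVec {m n R : Type*} [Fintype m] [Fintype n]
    [DecidableEq m] [CommSemiring R] {A : Matrix m n R} (hA : A * Aᵀ = 1) (x y : m → R) :
    Aᵀ *ᵥ x ⬝ᵥ Aᵀ *ᵥ y = x ⬝ᵥ y := by
  rw [dotProduct_mulVec, vecMul_transpose, mulVec_mulVec, hA, one_mulVec]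

lemma exists_ne_zero_mulVec_eq_zero_of_card_lt {K m n : Type*} [Field K] [Fintype m]
    [Fintype n] (R : Matrix m n K) (h : Fintype.card m < Fintype.card n) :
    ∃ x ≠ 0, R *ᵥ x = 0 := by
  obtain ⟨x, hx, hx0⟩ := (Submodule.ne_bot_iff _).mp
    (LinearMap.ker_ne_bot_of_finrank_lt (f := R.mulVecLin) (by simpa using h))
  exact ⟨x, hx0, hx⟩

lemma frobNorm_sq {m n : Type*} [Fintype m] [Fintype n] (A : Matrix m n ℝ) :
    frobNorm A ^ 2 = ∑ i, A i ⬝ᵥ A i := by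
  rw [frobNorm, Real.sq_sqrt (by positivity)]
  simp only [dotProduct, sq]

lemma dotProduct_mulVec_eq_sum_mul_sq {m n : Type*} [Fintype m] [Fintype n] [DecidableEq n]
    (Q : Matrix m n ℝ) (μ : n → ℝ) (x : m → ℝ) :
    x ⬝ᵥ (Q * diagonal μ * Qᵀ) *ᵥ x = ∑ i, μ i * (Qᵀ *ᵥ x) i ^ 2 := by
  rw [← mulVec_mulVec, ← mulVec_mulVec, dotProduct_mulVec, ← mulVec_transpose, dotProduct]
  simp only [mulVec_diagonal]
  exact Finset.sum_congr rfl fun i _ => by ring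

lemma transpose_mulVec_dotProduct_self_of_rows_eq_zero {m n : Type*} [Fintype m] [Fintype n]
    [DecidableEq n] {W : Matrix m n ℝ} (hW : Wᵀ * W = 1) (e : n ↪ m)
    (hrows : ∀ i ∉ Set.range e, W i = 0) (c : m → ℝ) :
    Wᵀ *ᵥ c ⬝ᵥ Wᵀ *ᵥ c = ∑ t, c (e t) ^ 2 := by
  have hsum : ∀ f : m → ℝ, (∀ i ∉ Set.range e, f i = 0) → ∑ t, f (e t) = ∑ i, f i :=
    fun f hf => Fintype.sum_of_injective e e.injective _ f hf fun _ => rfl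
  set M := W.submatrix e id
  have hWc : Wᵀ *ᵥ c = Mᵀ *ᵥ (c ∘ e) := by
    ext k
    simp only [mulVec_transpose, vecMul, dotProduct]
    exact (hsum _ fun i hi => by simp [hrows i hi]).symm
  have hM : Mᵀ * M = 1 := by
    rw [← hW]
    ext k l
    simp only [M, mul_apply, transpose_apply, submatrix_apply, id]
    exact hsum (fun i => W i k * W i l) fun i hi => by simp [hrows i hi]
  -- `M` is square, so orthonormal columns force orthonormal rows: this is the dimension count.
  rw [hWc, transpose_mulVec_dotProduct_transpose_mulVec (mul_eq_one_comm.mp hM), dotProduct]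
  simp only [Function.comp_apply, sq]

section Spectral

variable {m : Type*} [Fintype m] [DecidableEq m] {S Q : Matrix m m ℝ} {μ : m → ℝ}

lemma transpose_mulVec_mulVec_apply (hQ : Qᵀ * Q = 1) (hS : S = Q * diagonal μ * Qᵀ)
    (v : m → ℝ) (i : m) : (Qᵀ *ᵥ (S *ᵥ v)) i = μ i * (Qᵀ *ᵥ v) i := by
  rw [mulVec_mulVec, hS, ← Matrix.mul_assoc, ← Matrix.mul_assoc, hQ, Matrix.one_mul,
    ← mulVec_mulVec, mulVec_diagonal]

lemma transpose_mulVec_apply_eq_zero_of_mulVec_eq_smul (hQ : Qᵀ * Q = 1)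
    (hS : S = Q * diagonal μ * Qᵀ) {v : m → ℝ} {θ : ℝ} (hv : S *ᵥ v = θ • v) {i : m}
    (hi : μ i ≠ θ) : (Qᵀ *ᵥ v) i = 0 := by
  have h := transpose_mulVec_mulVec_apply hQ hS v i
  rw [hv, mulVec_smul, Pi.smul_apply, smul_eq_mul] at h
  refine (mul_eq_zero.mp ?_).resolve_left (sub_ne_zero.mpr hi)
  rw [sub_mul]
  linarith

lemma dotProduct_self_eq_sum_sq (hQ : Qᵀ * Q = 1) (x : m → ℝ) :
    x ⬝ᵥ x = ∑ i, (Qᵀ *ᵥ x) i ^ 2 := by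
  rw [← transpose_mulVec_dotProduct_transpose_mulVec (mul_eq_one_comm.mp hQ), dotProduct]
  simp only [sq]

lemma dotProduct_mulVec_le_of_le (hQ : Qᵀ * Q = 1) (hS : S = Q * diagonal μ * Qᵀ)
    {x : m → ℝ} {a : ℝ} (ha : ∀ i, (Qᵀ *ᵥ x) i ≠ 0 → μ i ≤ a) :
    x ⬝ᵥ S *ᵥ x ≤ a * (x ⬝ᵥ x) := by
  rw [hS, dotProduct_mulVec_eq_sum_mul_sq, dotProduct_self_eq_sum_sq hQ, Finset.mul_sum]
  refine Finset.sum_le_sum fun i _ => ?_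
  by_cases hi : (Qᵀ *ᵥ x) i = 0
  · simp [hi]
  · exact mul_le_mul_of_nonneg_right (ha i hi) (sq_nonneg _)

lemma le_dotProduct_mulVec_of_le (hQ : Qᵀ * Q = 1) (hS : S = Q * diagonal μ * Qᵀ)
    {x : m → ℝ} {b : ℝ} (hb : ∀ i, (Qᵀ *ᵥ x) i ≠ 0 → b ≤ μ i) :
    b * (x ⬝ᵥ x) ≤ x ⬝ᵥ S *ᵥ x := by
  rw [hS, dotProduct_mulVec_eq_sum_mul_sq, dotProduct_self_eq_sum_sq hQ, Finset.mul_sum]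
  refine Finset.sum_le_sum fun i _ => ?_
  by_cases hi : (Qᵀ *ᵥ x) i = 0
  · simp [hi]
  · exact mul_le_mul_of_nonneg_right (hb i hi) (sq_nonneg _)

lemma transpose_mulVec_dotProduct_self_eq_sum_block (hQ : Qᵀ * Q = 1)
    (hS : S = Q * diagonal μ * Qᵀ) {n : Type*} [Fintype n] [DecidableEq n] {V : Matrix m n ℝ}
    {θ : n → ℝ} (hV : Vᵀ * V = 1) (hVeig : ∀ k, S *ᵥ Vᵀ k = θ k • Vᵀ k) (e : n ↪ m)
    (hne : ∀ i ∉ Set.range e, ∀ k, μ i ≠ θ k) (x : m → ℝ) :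
    Vᵀ *ᵥ x ⬝ᵥ Vᵀ *ᵥ x = ∑ t, (Qᵀ *ᵥ x) (e t) ^ 2 := by
  have hQQ : Q * Qᵀ = 1 := mul_eq_one_comm.mp hQ
  have hW : (Qᵀ * V)ᵀ * (Qᵀ * V) = 1 := by
    rw [transpose_mul, transpose_transpose, Matrix.mul_assoc, ← Matrix.mul_assoc Q, hQQ,
      Matrix.one_mul, hV]
  have hrows : ∀ i ∉ Set.range e, (Qᵀ * V) i = 0 := fun i hi => funext fun k =>
    transpose_mulVec_apply_eq_zero_of_mulVec_eq_smul hQ hS (hVeig k) (hne i hi k)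
  have hx : Vᵀ *ᵥ x = (Qᵀ * V)ᵀ *ᵥ (Qᵀ *ᵥ x) := by
    rw [mulVec_mulVec, transpose_mul, transpose_transpose, Matrix.mul_assoc, hQQ, Matrix.mul_one]
  rw [hx]
  exact transpose_mulVec_dotProduct_self_of_rows_eq_zero hW e hrows _

end Spectral

theorem weyl_le_add_opNorm {p : ℕ} {S Sh Q Qh : Matrix (Fin p) (Fin p) ℝ} {μ ν : Fin p → ℝ}
    (hQ : Qᵀ * Q = 1) (hQh : Qhᵀ * Qh = 1)
    (hS : S = Q * diagonal μ * Qᵀ) (hSh : Sh = Qh * diagonal ν * Qhᵀ)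
    (k : Fin p) {a b : ℝ} (ha : ∀ i, k ≤ i → μ i ≤ a) (hb : ∀ i, i ≤ k → b ≤ ν i) :
    b ≤ a + opNorm (Sh - S) := by
  obtain ⟨x, hx0, hRx⟩ := exists_ne_zero_mulVec_eq_zero_of_card_lt
    (fromRows (Qᵀ.submatrix (Subtype.val : Finset.Iio k → Fin p) id)
      (Qhᵀ.submatrix (Subtype.val : Finset.Ioi k → Fin p) id))
    (by simp only [Fintype.card_sum, Fintype.card_coe, Fin.card_Iio, Fin.card_Ioi,
      Fintype.card_fin]; omega)
  rw [fromRows_mulVec] at hRx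
  have hc : ∀ i, (Qᵀ *ᵥ x) i ≠ 0 → k ≤ i := fun i hi => not_lt.mp fun hik =>
    hi (congrFun hRx (Sum.inl ⟨i, Finset.mem_Iio.mpr hik⟩))
  have hch : ∀ i, (Qhᵀ *ᵥ x) i ≠ 0 → i ≤ k := fun i hi => not_lt.mp fun hki =>
    hi (congrFun hRx (Sum.inr ⟨i, Finset.mem_Ioi.mpr hki⟩))
  have hpos : 0 < x ⬝ᵥ x := (Finset.sum_nonneg fun i _ => mul_self_nonneg (x i)).lt_of_ne'
    (dotProduct_self_eq_zero.not.mpr hx0)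
  have hSx := dotProduct_mulVec_le_of_le hQ hS fun i hi => ha i (hc i hi)
  have hShx := le_dotProduct_mulVec_of_le hQh hSh fun i hi => hb i (hch i hi)
  have hE := dotProduct_mulVec_le_opNorm_mul (Sh - S) x
  rw [sub_mulVec, dotProduct_sub] at hE
  exact le_of_mul_le_mul_right (by linarith) hpos

section DavisKahan

variable {p : ℕ} {S Sh Q : Matrix (Fin p) (Fin p) ℝ} {μ : Fin p → ℝ}

lemma sum_sq_sub_mul_sq_le (hQ : Qᵀ * Q = 1) (hS : S = Q * diagonal μ * Qᵀ) {x : Fin p → ℝ}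
    {θ : ℝ} (hx : Sh *ᵥ x = θ • x) :
    ∑ i, (μ i - θ) ^ 2 * (Qᵀ *ᵥ x) i ^ 2 ≤ opNorm (Sh - S) ^ 2 * (x ⬝ᵥ x) := by
  have hcoord : ∀ i, (Qᵀ *ᵥ ((Sh - S) *ᵥ x)) i = (θ - μ i) * (Qᵀ *ᵥ x) i := fun i => by
    rw [sub_mulVec, hx, mulVec_sub, mulVec_smul, Pi.sub_apply, Pi.smul_apply, smul_eq_mul,
      transpose_mulVec_mulVec_apply hQ hS]
    ring
  calc ∑ i, (μ i - θ) ^ 2 * (Qᵀ *ᵥ x) i ^ 2 = (Sh - S) *ᵥ x ⬝ᵥ (Sh - S) *ᵥ x := by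
        rw [dotProduct_self_eq_sum_sq hQ]
        exact Finset.sum_congr rfl fun i _ => by rw [hcoord]; ring
    _ ≤ opNorm (Sh - S) ^ 2 * (x ⬝ᵥ x) := mulVec_dotProduct_self_le_opNorm_sq_mul _ x

lemma sq_mul_sub_sum_block_le {n : Type*} [Fintype n] (hQ : Qᵀ * Q = 1)
    (hS : S = Q * diagonal μ * Qᵀ) {x : Fin p → ℝ} {θ : ℝ} (hx : Sh *ᵥ x = θ • x)
    (e : n ↪ Fin p) {g : ℝ} (hgap : ∀ i ∉ Set.range e, g ^ 2 ≤ (μ i - θ) ^ 2) :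
    g ^ 2 * (x ⬝ᵥ x - ∑ t, (Qᵀ *ᵥ x) (e t) ^ 2) ≤ opNorm (Sh - S) ^ 2 * (x ⬝ᵥ x) := by
  classical
  set c := Qᵀ *ᵥ x
  have hblock : ∑ t, c (e t) ^ 2 = ∑ i, if i ∈ Set.range e then c i ^ 2 else 0 :=
    Fintype.sum_of_injective e e.injective _ _ (fun i hi => if_neg hi) fun t => by simp
  calc g ^ 2 * (x ⬝ᵥ x - ∑ t, c (e t) ^ 2)
      = ∑ i, g ^ 2 * (c i ^ 2 - if i ∈ Set.range e then c i ^ 2 else 0) := by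
        rw [hblock, dotProduct_self_eq_sum_sq hQ, ← Finset.sum_sub_distrib, Finset.mul_sum]
    _ ≤ ∑ i, (μ i - θ) ^ 2 * c i ^ 2 := Finset.sum_le_sum fun i _ => by
        split_ifs with hi
        · simp only [sub_self, mul_zero]; positivity
        · simpa using mul_le_mul_of_nonneg_right (hgap i hi) (sq_nonneg (c i))
    _ ≤ opNorm (Sh - S) ^ 2 * (x ⬝ᵥ x) := sum_sq_sub_mul_sq_le hQ hS hx

theorem sq_mul_sub_frobNorm_sq_le {d : ℕ} {V Vh : Matrix (Fin p) (Fin d) ℝ} {θ θh : Fin d → ℝ}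
    (hQ : Qᵀ * Q = 1) (hS : S = Q * diagonal μ * Qᵀ) (hV : Vᵀ * V = 1) (hVh : Vhᵀ * Vh = 1)
    (hVeig : ∀ k, S *ᵥ Vᵀ k = θ k • Vᵀ k) (hVheig : ∀ j, Sh *ᵥ Vhᵀ j = θh j • Vhᵀ j)
    (e : Fin d ↪ Fin p) (hne : ∀ i ∉ Set.range e, ∀ k, μ i ≠ θ k) {g : ℝ}
    (hgap : ∀ i ∉ Set.range e, ∀ j, g ^ 2 ≤ (μ i - θh j) ^ 2) :
    g ^ 2 * (d - frobNorm (Vhᵀ * V) ^ 2) ≤ d * opNorm (Sh - S) ^ 2 := by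
  have hunit : ∀ j, Vhᵀ j ⬝ᵥ Vhᵀ j = 1 := fun j => by
    have h := congrFun₂ hVh j j
    rw [mul_apply', one_apply_eq] at h
    exact h
  have hrow : ∀ j, (Vhᵀ * V) j = Vᵀ *ᵥ Vhᵀ j := fun j => by rw [mulVec_transpose]; rfl
  calc g ^ 2 * (d - frobNorm (Vhᵀ * V) ^ 2)
      = ∑ j, g ^ 2 * (Vhᵀ j ⬝ᵥ Vhᵀ j - ∑ t, (Qᵀ *ᵥ Vhᵀ j) (e t) ^ 2) := by
        simp only [frobNorm_sq, hrow, transpose_mulVec_dotProduct_self_eq_sum_block hQ hS hV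
          hVeig e hne, hunit, ← Finset.mul_sum, Finset.sum_sub_distrib]
        simp
    _ ≤ ∑ j, opNorm (Sh - S) ^ 2 * (Vhᵀ j ⬝ᵥ Vhᵀ j) := Finset.sum_le_sum fun j _ =>
        sq_mul_sub_sum_block_le hQ hS (hVheig j) e fun i hi => hgap i hi j
    _ = d * opNorm (Sh - S) ^ 2 := by simp [hunit]

end DavisKahan

lemma sqrt_le_two_mul_sqrt_mul_div {X D ε δ : ℝ} (hD : 0 ≤ D) (hε : 0 ≤ ε) (hδ : 0 < δ)
    (hXD : X ≤ D) (h : 2 * ε < δ → (δ / 2) ^ 2 * X ≤ D * ε ^ 2) :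
    Real.sqrt X ≤ 2 * Real.sqrt D * ε / δ := by
  rcases le_or_gt δ (2 * ε) with hbig | hsmall
  · calc Real.sqrt X ≤ Real.sqrt D := Real.sqrt_le_sqrt hXD
      _ ≤ 2 * Real.sqrt D * ε / δ := by
        rw [le_div_iff₀ hδ]
        nlinarith [Real.sqrt_nonneg D]
  calc Real.sqrt X ≤ Real.sqrt ((Real.sqrt D * ε / (δ / 2)) ^ 2) := by
        refine Real.sqrt_le_sqrt ?_
        rw [div_pow, mul_pow, Real.sq_sqrt hD, le_div_iff₀ (by positivity)]
        linarith [h hsmall]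
    _ = 2 * Real.sqrt D * ε / δ := by
        rw [Real.sqrt_sq (by positivity)]
        field_simp

lemma half_sq_le_sq_sub {a t l u δ ε : ℝ} (hε : 0 ≤ ε) (hεδ : 2 * ε ≤ δ)
    (ha : u + δ ≤ a ∨ a + δ ≤ l) (hlt : l ≤ t + ε) (htu : t ≤ u + ε) :
    (δ / 2) ^ 2 ≤ (a - t) ^ 2 := by
  rcases ha with ha | ha <;> nlinarith

-- Eigenvalue index `r + t` (1-based) sits at the 0-based position `r - 1 + t`.
def blockEmb {p r s d : ℕ} (hr : 1 ≤ r) (hrs : r ≤ s) (hsp : s ≤ p) (hd : d = s - r + 1) :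
    Fin d ↪ Fin p :=
  ⟨fun t => ⟨r - 1 + t, by omega⟩, fun t u h => by simpa [Fin.ext_iff] using h⟩

lemma lt_or_lt_of_notMem_range_blockEmb {p r s d : ℕ} (hr : 1 ≤ r) (hrs : r ≤ s) (hsp : s ≤ p)
    (hd : d = s - r + 1) {i : Fin p} (hi : i ∉ Set.range (blockEmb hr hrs hsp hd)) :
    i.1 + 1 < r ∨ s < i.1 + 1 := by
  by_contra h
  push Not at h
  exact hi ⟨⟨i.1 + 1 - r, by omega⟩, Fin.ext (show r - 1 + (i.1 + 1 - r) = i.1 by omega)⟩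

lemma gap_of_notMem_range_blockEmb {p r s d : ℕ} (hr : 1 ≤ r) (hrs : r ≤ s) (hsp : s ≤ p)
    (hd : d = s - r + 1) {lam : ℕ → ℝ} (hmono : ∀ i j, 1 ≤ i → i ≤ j → j ≤ p → lam j ≤ lam i)
    {δ : ℝ} (hgapr : 1 < r → δ ≤ lam (r - 1) - lam r) (hgaps : s < p → δ ≤ lam s - lam (s + 1))
    {i : Fin p} (hi : i ∉ Set.range (blockEmb hr hrs hsp hd)) :
    lam r + δ ≤ lam (i.1 + 1) ∨ lam (i.1 + 1) + δ ≤ lam s := by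
  rcases lt_or_lt_of_notMem_range_blockEmb hr hrs hsp hd hi with h | h
  · exact .inl (by
      linarith [hgapr (by omega), hmono (i.1 + 1) (r - 1) (by omega) (by omega) (by omega)])
  · exact .inr (by linarith [hgaps (by omega), hmono (s + 1) (i.1 + 1) (by omega) h i.2])

theorem stmt0_general
    (p r s d : ℕ) (hr : 1 ≤ r) (hrs : r ≤ s) (hsp : s ≤ p) (hd : d = s - r + 1)
    (lam lamh : ℕ → ℝ)
    (hmono : ∀ i j, 1 ≤ i → i ≤ j → j ≤ p → lam j ≤ lam i)
    (hmonoh : ∀ i j, 1 ≤ i → i ≤ j → j ≤ p → lamh j ≤ lamh i)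
    (S Sh : Matrix (Fin p) (Fin p) ℝ)
    (hSspec : ∃ Q : Matrix (Fin p) (Fin p) ℝ, Qᵀ * Q = 1 ∧
      S = Q * Matrix.diagonal (fun i : Fin p => lam (i.1 + 1)) * Qᵀ)
    (hShspec : ∃ Q : Matrix (Fin p) (Fin p) ℝ, Qᵀ * Q = 1 ∧
      Sh = Q * Matrix.diagonal (fun i : Fin p => lamh (i.1 + 1)) * Qᵀ)
    (δ : ℝ) (hδ : 0 < δ)
    (hgapr : 1 < r → δ ≤ lam (r - 1) - lam r)
    (hgaps : s < p → δ ≤ lam s - lam (s + 1))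
    (V Vh : Matrix (Fin p) (Fin d) ℝ) (hV : Vᵀ * V = 1) (hVh : Vhᵀ * Vh = 1)
    (hVeig : ∀ j : Fin d, S.mulVec (fun i => V i j) = lam (r + j.1) • (fun i => V i j))
    (hVheig : ∀ j : Fin d, Sh.mulVec (fun i => Vh i j) = lamh (r + j.1) • (fun i => Vh i j)) :
    Real.sqrt ((d : ℝ) - (frobNorm (Vhᵀ * V)) ^ 2) ≤ 2 * Real.sqrt d * opNorm (Sh - S) / δ := by
  obtain ⟨Q, hQ, hS⟩ := hSspec
  obtain ⟨Qh, hQh, hSh⟩ := hShspec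
  set ε := opNorm (Sh - S) with hε_def
  have hε : 0 ≤ ε := norm_nonneg _
  have hsep := fun i (hi : i ∉ _) =>
    gap_of_notMem_range_blockEmb hr hrs hsp hd hmono hgapr hgaps hi
  refine sqrt_le_two_mul_sqrt_mul_div (Nat.cast_nonneg d) hε hδ
    (by linarith [sq_nonneg (frobNorm (Vhᵀ * V))]) fun hsmall => ?_
  have hweyl_r : lamh r ≤ lam r + ε := weyl_le_add_opNorm hQ hQh hS hSh ⟨r - 1, by omega⟩
    (fun i (hi : r - 1 ≤ i.1) => hmono r _ hr (by omega) (by omega))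
    (fun i (hi : i.1 ≤ r - 1) => hmonoh _ r (by omega) (by omega) (by omega))
  have hweyl_s : lam s ≤ lamh s + ε := by
    rw [hε_def, opNorm_sub_comm]
    exact weyl_le_add_opNorm hQh hQ hSh hS ⟨s - 1, by omega⟩
      (fun i (hi : s - 1 ≤ i.1) => hmonoh s _ (by omega) (by omega) (by omega))
      (fun i (hi : i.1 ≤ s - 1) => hmono _ s (by omega) (by omega) hsp)
  refine sq_mul_sub_frobNorm_sq_le hQ hS hV hVh hVeig hVheig (blockEmb hr hrs hsp hd)
    (fun i hi k heq => ?_) (fun i hi j => ?_)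
  · have h := half_sq_le_sq_sub le_rfl (by linarith) (hsep i hi)
      (by linarith [hmono (r + k) s (by omega) (by omega) hsp])
      (by linarith [hmono r (r + k) hr (by omega) (by omega)])
    rw [heq, sub_self] at h
    nlinarith
  · exact half_sq_le_sq_sub hε hsmall.le (hsep i hi)
      (by linarith [hmonoh (r + j) s (by omega) (by omega) hsp])
      (by linarith [hmonoh r (r + j) hr (by omega) (by omega)])

theorem stmt0
    (p r s d : ℕ) (hr : 1 ≤ r) (hrs : r ≤ s) (hsp : s ≤ p) (hd : d = s - r + 1)
    (lam lamh : ℕ → ℝ)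
    (hmono : ∀ i j, 1 ≤ i → i ≤ j → j ≤ p → lam j ≤ lam i)
    (hmonoh : ∀ i j, 1 ≤ i → i ≤ j → j ≤ p → lamh j ≤ lamh i)
    (S Sh : Matrix (Fin p) (Fin p) ℝ) (hSsymm : S.IsSymm) (hShsymm : Sh.IsSymm)
    (hSspec : ∃ Q : Matrix (Fin p) (Fin p) ℝ, Qᵀ * Q = 1 ∧
      S = Q * Matrix.diagonal (fun i : Fin p => lam (i.1 + 1)) * Qᵀ)
    (hShspec : ∃ Q : Matrix (Fin p) (Fin p) ℝ, Qᵀ * Q = 1 ∧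
      Sh = Q * Matrix.diagonal (fun i : Fin p => lamh (i.1 + 1)) * Qᵀ)
    (δ : ℝ) (hδ : 0 < δ)
    (hgapr : 1 < r → δ ≤ lam (r - 1) - lam r)
    (hgaps : s < p → δ ≤ lam s - lam (s + 1))
    (V Vh : Matrix (Fin p) (Fin d) ℝ) (hV : Vᵀ * V = 1) (hVh : Vhᵀ * Vh = 1)
    (hVeig : ∀ j : Fin d, S.mulVec (fun i => V i j) = lam (r + j.1) • (fun i => V i j))
    (hVheig : ∀ j : Fin d, Sh.mulVec (fun i => Vh i j) = lamh (r + j.1) • (fun i => Vh i j)) :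
    Real.sqrt ((d : ℝ) - (frobNorm (Vhᵀ * V)) ^ 2) ≤ 2 * Real.sqrt d * opNorm (Sh - S) / δ :=
  stmt0_general p r s d hr hrs hsp hd lam lamh hmono hmonoh S Sh hSspec hShspec δ hδ hgapr hgaps V
    Vh hV hVh hVeig hVheig
end

section
/- Let Σ ∈ ℝ^{p×p} be symmetric with eigenvalues λ₁ ≥ … ≥ λ_p, fix 1 ≤ r ≤ s ≤ p with d := s − r + 1, assume δ := min(λ_{r−1} − λ_r, λ_s − λ_{s+1}) > 0 (with λ₀ := ∞, λ_{p+1} := −∞), and set Λ := diag(λ_r, …, λ_s). Let V = (v_r, …, v_s) ∈ ℝ^{p×d} have orthonormal columns with Σv_j = λ_j v_j for j = r, …, s, and let V̂ ∈ ℝ^{p×d} be any matrix with orthonormal columns. Then δ · ‖sin Θ(V̂, V)‖_F ≤ ‖V̂Λ − ΣV̂‖_F. -/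
/-!
Rotate into an eigenbasis `Q` of `Σ`, in which `Σ` becomes `diagonal μ`, `V` becomes `U = Qᵀ V`
and `V̂` becomes `W = Qᵀ V̂`. By the eigen-equation `diagonal μ * U = U * Λ` and the eigengap, every
row of `U` off the window `J` of coordinates carrying `λ_r, …, λ_s` vanishes; an orthonormal
`d`-frame supported on `d` coordinates has `U Uᵀ = 1_J`, hence `d - ‖V̂ᵀ V‖² = ∑_{i ∉ J} ‖W_i‖²` is
the mass of `W` off the window. On the other hand `‖V̂ Λ - Σ V̂‖² = ∑_{i,k} (λ_k - μ_i)² W_{ik}²`,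
and for `i ∉ J` every weight is at least `δ²`.
-/

open Matrix

section Frobenius

variable {ι ι' κ : Type*} [Fintype ι] [Fintype ι'] [Fintype κ]

lemma frobNorm_sq_s9 (A : Matrix ι κ ℝ) : frobNorm A ^ 2 = ∑ i, ∑ k, A i k ^ 2 :=
  Real.sq_sqrt (by positivity)

lemma sum_sq_eq_trace_transpose_mul (A : Matrix ι κ ℝ) :
    ∑ i, ∑ k, A i k ^ 2 = (Aᵀ * A).trace := by
  simp only [trace, diag, mul_apply, transpose_apply, sq]
  exact Finset.sum_comm

lemma frobNorm_eq_sqrt_trace (A : Matrix ι κ ℝ) : frobNorm A = √(Aᵀ * A).trace := by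
  rw [frobNorm, sum_sq_eq_trace_transpose_mul]

lemma frobNorm_sq_eq_trace (A : Matrix ι κ ℝ) : frobNorm A ^ 2 = (Aᵀ * A).trace := by
  rw [frobNorm_sq_s9, sum_sq_eq_trace_transpose_mul]

lemma frobNorm_transpose (A : Matrix ι κ ℝ) : frobNorm Aᵀ = frobNorm A := by
  rw [frobNorm, frobNorm, Finset.sum_comm]
  rfl

lemma frobNorm_mul_of_transpose_mul_self [DecidableEq ι] {Q : Matrix ι' ι ℝ} (hQ : Qᵀ * Q = 1)
    (A : Matrix ι κ ℝ) : frobNorm (Q * A) = frobNorm A := by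
  rw [frobNorm_eq_sqrt_trace, frobNorm_eq_sqrt_trace, transpose_mul, Matrix.mul_assoc,
    ← Matrix.mul_assoc Qᵀ, hQ, Matrix.one_mul]

lemma frobNorm_sq_mul_diagonal_sub_diagonal_mul [DecidableEq ι] [DecidableEq κ]
    (W : Matrix ι κ ℝ) (μ : ι → ℝ) (ν : κ → ℝ) :
    frobNorm (W * diagonal ν - diagonal μ * W) ^ 2 = ∑ i, ∑ k, (ν k - μ i) ^ 2 * W i k ^ 2 := by
  simp only [frobNorm_sq_s9, Matrix.sub_apply, mul_diagonal, diagonal_mul]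
  exact Finset.sum_congr rfl fun i _ => Finset.sum_congr rfl fun k _ => by ring

end Frobenius

namespace Matrix

variable {ι κ : Type*} [Fintype ι] [Fintype κ] [DecidableEq ι] [DecidableEq κ]

lemma apply_eq_zero_of_diagonal_mul_eq_mul_diagonal {μ : ι → ℝ} {ν : κ → ℝ} {U : Matrix ι κ ℝ}
    (hU : diagonal μ * U = U * diagonal ν) {i : ι} {k : κ} (hne : μ i ≠ ν k) : U i k = 0 := by
  have h := congrFun (congrFun hU i) k
  rw [diagonal_mul, mul_diagonal] at h
  exact (mul_left_inj' (sub_ne_zero.mpr hne)).mp (by linear_combination h)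

lemma mul_transpose_eq_diagonal_of_rows_eq_zero {U : Matrix ι κ ℝ} (hU : Uᵀ * U = 1)
    {J : Finset ι} (hJ : J.card = Fintype.card κ) (h0 : ∀ i ∉ J, ∀ k, U i k = 0) :
    U * Uᵀ = diagonal fun i => if i ∈ J then 1 else 0 := by
  let e : κ ≃ J := Fintype.equivOfCardEq (by simp [hJ])
  have sum_eq : ∀ F : ι → ℝ, (∀ i ∉ J, F i = 0) → ∑ i, F i = ∑ k, F (e k) := fun F hF => by
    rw [← Finset.sum_subset J.subset_univ fun i _ hi => hF i hi, ← Finset.sum_coe_sort,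
      e.sum_comp (fun i : J => F i)]
  let B : Matrix κ κ ℝ := U.submatrix (fun k => (e k : ι)) id
  -- `B` is square, so `Bᵀ * B = 1` forces `B * Bᵀ = 1`
  have hB : B * Bᵀ = 1 := by
    refine mul_eq_one_comm.mp ?_
    rw [← hU]
    ext k l
    simp only [B, mul_apply, transpose_apply, submatrix_apply, id]
    exact (sum_eq (fun i => U i k * U i l) fun i hi => by simp [h0 i hi]).symm
  ext i i'
  by_cases hi : i ∈ J
  · by_cases hi' : i' ∈ J
    · have := congrFun (congrFun hB (e.symm ⟨i, hi⟩)) (e.symm ⟨i', hi'⟩)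
      simp only [B, mul_apply, transpose_apply, submatrix_apply, id, Equiv.apply_symm_apply,
        one_apply, EmbeddingLike.apply_eq_iff_eq, Subtype.mk.injEq] at this
      simp [mul_apply, this, diagonal_apply, hi]
    · simp [mul_apply, h0 i' hi', ne_of_mem_of_not_mem hi hi']
  · simp [mul_apply, h0 i hi, diagonal_apply, hi]

end Matrix

section DavisKahan

variable {ι κ : Type*} [Fintype ι] [Fintype κ] [DecidableEq ι] [DecidableEq κ]

lemma card_sub_frobNorm_sq_transpose_mul {U W : Matrix ι κ ℝ} (hU : Uᵀ * U = 1)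
    (hW : Wᵀ * W = 1) {J : Finset ι} (hJ : J.card = Fintype.card κ)
    (h0 : ∀ i ∉ J, ∀ k, U i k = 0) :
    (Fintype.card κ : ℝ) - frobNorm (Wᵀ * U) ^ 2 = ∑ i ∈ Jᶜ, ∑ k, W i k ^ 2 := by
  have hWU : frobNorm (Wᵀ * U) ^ 2 = ∑ i ∈ J, ∑ k, W i k ^ 2 := by
    rw [← frobNorm_transpose, frobNorm_sq_eq_trace]
    simp only [transpose_mul, transpose_transpose, Matrix.mul_assoc]
    rw [← Matrix.mul_assoc U, mul_transpose_eq_diagonal_of_rows_eq_zero hU hJ h0]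
    simp only [trace, diag, mul_apply, transpose_apply, diagonal_apply, ite_mul, one_mul,
      zero_mul, Finset.sum_ite_eq, Finset.mem_univ, if_true, mul_ite, mul_zero,
      Finset.sum_ite_mem, Finset.univ_inter, ← sq]
    exact Finset.sum_comm
  have hW' : ∑ i, ∑ k, W i k ^ 2 = Fintype.card κ := by
    simp [sum_sq_eq_trace_transpose_mul, hW]
  rw [hWU, ← hW', ← Finset.sum_add_sum_compl J]
  ring

theorem sq_mul_card_sub_frobNorm_sq_le {μ : ι → ℝ} {ν : κ → ℝ} {J : Finset ι} {δ : ℝ}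
    (hδ : 0 < δ) (hgap : ∀ i ∉ J, ∀ k, δ ≤ |ν k - μ i|) (hJ : J.card = Fintype.card κ)
    {U W : Matrix ι κ ℝ} (hU : Uᵀ * U = 1) (hW : Wᵀ * W = 1)
    (hDU : diagonal μ * U = U * diagonal ν) :
    δ ^ 2 * ((Fintype.card κ : ℝ) - frobNorm (Wᵀ * U) ^ 2) ≤
      frobNorm (W * diagonal ν - diagonal μ * W) ^ 2 := by
  have h0 : ∀ i ∉ J, ∀ k, U i k = 0 := fun i hi k =>
    apply_eq_zero_of_diagonal_mul_eq_mul_diagonal hDU fun h => by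
      have := hgap i hi k
      rw [h, sub_self, abs_zero] at this
      linarith
  rw [card_sub_frobNorm_sq_transpose_mul hU hW hJ h0,
    frobNorm_sq_mul_diagonal_sub_diagonal_mul, Finset.mul_sum]
  calc ∑ i ∈ Jᶜ, δ ^ 2 * ∑ k, W i k ^ 2
      ≤ ∑ i ∈ Jᶜ, ∑ k, (ν k - μ i) ^ 2 * W i k ^ 2 := by
        refine Finset.sum_le_sum fun i hi => ?_
        rw [Finset.mul_sum]
        refine Finset.sum_le_sum fun k _ => mul_le_mul_of_nonneg_right ?_ (sq_nonneg _)
        rw [← sq_abs (ν k - μ i)]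
        exact pow_le_pow_left₀ hδ.le (hgap i (Finset.mem_compl.mp hi) k) 2
    _ ≤ ∑ i, ∑ k, (ν k - μ i) ^ 2 * W i k ^ 2 :=
        Finset.sum_le_sum_of_subset_of_nonneg (Finset.subset_univ _) fun _ _ _ => by positivity

theorem mul_sqrt_card_sub_frobNorm_sq_le {μ : ι → ℝ} {ν : κ → ℝ} {J : Finset ι} {δ : ℝ}
    (hδ : 0 < δ) (hgap : ∀ i ∉ J, ∀ k, δ ≤ |ν k - μ i|) (hJ : J.card = Fintype.card κ)
    {S Q : Matrix ι ι ℝ} (hQ : Qᵀ * Q = 1) (hS : S = Q * diagonal μ * Qᵀ)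
    {V Vh : Matrix ι κ ℝ} (hV : Vᵀ * V = 1) (hVh : Vhᵀ * Vh = 1)
    (hSV : S * V = V * diagonal ν) :
    δ * √((Fintype.card κ : ℝ) - frobNorm (Vhᵀ * V) ^ 2) ≤
      frobNorm (Vh * diagonal ν - S * Vh) := by
  have hQ' : Q * Qᵀ = 1 := mul_eq_one_comm.mp hQ
  have hQS : Qᵀ * S = diagonal μ * Qᵀ := by
    rw [hS, ← Matrix.mul_assoc, ← Matrix.mul_assoc, hQ, Matrix.one_mul]
  have rotate : ∀ A B : Matrix ι κ ℝ, (Qᵀ * A)ᵀ * (Qᵀ * B) = Aᵀ * B := fun A B => by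
    rw [transpose_mul, transpose_transpose, Matrix.mul_assoc, ← Matrix.mul_assoc Q, hQ',
      Matrix.one_mul]
  have hE : Qᵀ * Vh * diagonal ν - diagonal μ * (Qᵀ * Vh) = Qᵀ * (Vh * diagonal ν - S * Vh) := by
    rw [Matrix.mul_sub, Matrix.mul_assoc Qᵀ Vh, ← Matrix.mul_assoc Qᵀ S, hQS,
      Matrix.mul_assoc (diagonal μ)]
  have key := sq_mul_card_sub_frobNorm_sq_le hδ hgap hJ ((rotate V V).trans hV)
    ((rotate Vh Vh).trans hVh)
    (by rw [← Matrix.mul_assoc, ← hQS, Matrix.mul_assoc, hSV, Matrix.mul_assoc])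
  rw [rotate, hE,
    frobNorm_mul_of_transpose_mul_self (Q := Qᵀ) (by rwa [transpose_transpose])] at key
  rw [← Real.sqrt_sq hδ.le, ← Real.sqrt_mul (sq_nonneg δ)]
  exact Real.sqrt_le_iff.mpr ⟨Real.sqrt_nonneg _, key⟩

end DavisKahan

lemma le_abs_sub_of_gaps {p r s : ℕ} {lam : ℕ → ℝ} {δ : ℝ}
    (hmono : ∀ i j, 1 ≤ i → i ≤ j → j ≤ p → lam j ≤ lam i)
    (hgapr : 1 < r → δ ≤ lam (r - 1) - lam r) (hgaps : s < p → δ ≤ lam s - lam (s + 1))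
    (hsp : s ≤ p) {i j : ℕ} (hi : 1 ≤ i) (hip : i ≤ p) (hj : 1 ≤ j) (hrj : r ≤ j) (hjs : j ≤ s)
    (hout : i < r ∨ s < i) : δ ≤ |lam j - lam i| := by
  rcases hout with hir | hsi
  · have := hgapr (by omega)
    have := hmono i (r - 1) hi (by omega) (by omega)
    have := hmono r j (by omega) hrj (by omega)
    rw [abs_sub_comm]
    exact le_abs.mpr (Or.inl (by linarith))
  · have := hgaps (by omega)
    have := hmono (s + 1) i (by omega) hsi hip
    have := hmono j s hj hjs hsp
    exact le_abs.mpr (Or.inl (by linarith))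

theorem stmt9_general
    (p r s d : ℕ) (hr : 1 ≤ r) (hrs : r ≤ s) (hsp : s ≤ p) (hd : d = s - r + 1)
    (lam : ℕ → ℝ)
    (hmono : ∀ i j, 1 ≤ i → i ≤ j → j ≤ p → lam j ≤ lam i)
    (S : Matrix (Fin p) (Fin p) ℝ)
    (hSspec : ∃ Q : Matrix (Fin p) (Fin p) ℝ, Qᵀ * Q = 1 ∧
      S = Q * Matrix.diagonal (fun i : Fin p => lam (i.1 + 1)) * Qᵀ)
    (δ : ℝ) (hδ : 0 < δ)
    (hgapr : 1 < r → δ ≤ lam (r - 1) - lam r)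
    (hgaps : s < p → δ ≤ lam s - lam (s + 1))
    (V Vh : Matrix (Fin p) (Fin d) ℝ) (hV : Vᵀ * V = 1) (hVh : Vhᵀ * Vh = 1)
    (hVeig : ∀ j : Fin d, S.mulVec (fun i => V i j) = lam (r + j.1) • (fun i => V i j)) :
    δ * Real.sqrt ((d : ℝ) - (frobNorm (Vhᵀ * V)) ^ 2) ≤
      frobNorm (Vh * Matrix.diagonal (fun j : Fin d => lam (r + j.1)) - S * Vh) := by
  obtain ⟨Q, hQ, hS⟩ := hSspec
  -- the eigenvalue window `λ_r, …, λ_s` sits at the 0-based coordinates `r - 1, …, s - 1`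
  let J : Finset (Fin p) := (Finset.Ico (r - 1) s).attachFin fun m hm => by
    rw [Finset.mem_Ico] at hm
    omega
  have hJ : J.card = Fintype.card (Fin d) := by
    rw [Finset.card_attachFin, Nat.card_Ico, Fintype.card_fin]
    omega
  have hgap : ∀ i ∉ J, ∀ k : Fin d, δ ≤ |lam (r + k.1) - lam (i.1 + 1)| := fun i hi k => by
    rw [Finset.mem_attachFin, Finset.mem_Ico] at hi
    exact le_abs_sub_of_gaps hmono hgapr hgaps hsp (by omega) i.2 (by omega) (by omega)
      (by omega) (by omega)
  have hSV : S * V = V * diagonal fun k : Fin d => lam (r + k.1) := by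
    ext i k
    rw [mul_diagonal]
    simpa [mul_apply, mulVec, dotProduct, mul_comm] using congrFun (hVeig k) i
  have := mul_sqrt_card_sub_frobNorm_sq_le hδ hgap hJ hQ hS hV hVh hSV
  rwa [Fintype.card_fin] at this

theorem stmt9
    (p r s d : ℕ) (hr : 1 ≤ r) (hrs : r ≤ s) (hsp : s ≤ p) (hd : d = s - r + 1)
    (lam : ℕ → ℝ)
    (hmono : ∀ i j, 1 ≤ i → i ≤ j → j ≤ p → lam j ≤ lam i)
    (S : Matrix (Fin p) (Fin p) ℝ) (hSsymm : S.IsSymm)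
    (hSspec : ∃ Q : Matrix (Fin p) (Fin p) ℝ, Qᵀ * Q = 1 ∧
      S = Q * Matrix.diagonal (fun i : Fin p => lam (i.1 + 1)) * Qᵀ)
    (δ : ℝ) (hδ : 0 < δ)
    (hgapr : 1 < r → δ ≤ lam (r - 1) - lam r)
    (hgaps : s < p → δ ≤ lam s - lam (s + 1))
    (V Vh : Matrix (Fin p) (Fin d) ℝ) (hV : Vᵀ * V = 1) (hVh : Vhᵀ * Vh = 1)
    (hVeig : ∀ j : Fin d, S.mulVec (fun i => V i j) = lam (r + j.1) • (fun i => V i j)) :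
    δ * Real.sqrt ((d : ℝ) - (frobNorm (Vhᵀ * V)) ^ 2) ≤
      frobNorm (Vh * Matrix.diagonal (fun j : Fin d => lam (r + j.1)) - S * Vh) :=
  stmt9_general p r s d hr hrs hsp hd lam hmono S hSspec δ hδ hgapr hgaps V Vh hV hVh hVeig
end
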